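/- Assume: consistency for a=1; conditional mean exchangeability over A in the trial for a=1 with trial positivity for a=1; mean transportability to the third population: E[Y¹|X=x,S=2]=E[Y¹|X=x,S=1] whenever P(X=x,S=2)>0 and P(X=x,S=1)>0; and positivity P(S=1|X=x)>0 for every x with P(X=x,S=2)>0. Then E[Y¹ | S=2] = γ*_{1,1} := Σ_x E[Y|X=x,S=1,A=1] · P(X=x | S=2), summing over x with P(X=x,S=2)>0. -/

import Mathlib

open Finset
open scoped Classical

noncomputable def pr {Ω : Type*} [Fintype Ω] (P : Ω → ℝ) (E : Ω → Prop) : ℝ :=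
  ∑ ω, if E ω then P ω else 0

noncomputable def cexp {Ω : Type*} [Fintype Ω] (P : Ω → ℝ) (Y : Ω → ℝ) (E : Ω → Prop) : ℝ :=
  (∑ ω, if E ω then Y ω * P ω else 0) / pr P E

noncomputable def cpr {Ω : Type*} [Fintype Ω] (P : Ω → ℝ) (E F : Ω → Prop) : ℝ :=
  pr P (fun ω => E ω ∧ F ω) / pr P F

/-!
Condition on `X` inside the target population and apply the law of total expectation:
`E[Y¹ | S = 2] = ∑ₓ E[Y¹ | X = x, S = 2] P(X = x | S = 2)`. On every stratum of positive mass,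
positivity of `P(S = 1 | X = x)` makes the trial stratum non-empty, so transportability, then
exchangeability, then consistency turn `E[Y¹ | X = x, S = 2]` into `E[Y | X = x, S = 1, A = 1]`.
-/

section

variable {Ω : Type*} [Fintype Ω] {P : Ω → ℝ}

lemma pr_congr {E F : Ω → Prop} (h : ∀ ω, E ω ↔ F ω) : pr P E = pr P F :=
  sum_congr rfl fun ω _ => by simp only [h ω]

lemma pr_nonneg (hP : ∀ ω, 0 ≤ P ω) (E : Ω → Prop) : 0 ≤ pr P E :=
  sum_nonneg fun ω _ => by split_ifs <;> simp [hP ω]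

lemma pr_pos_of_cpr_pos (hP : ∀ ω, 0 ≤ P ω) {E F : Ω → Prop} (h : 0 < cpr P E F) :
    0 < pr P (fun ω => E ω ∧ F ω) := by
  refine (pr_nonneg hP _).lt_of_ne fun h0 => ?_
  simp [cpr, ← h0] at h

lemma sum_ite_mul_eq_zero_of_pr_eq_zero (hP : ∀ ω, 0 ≤ P ω) (Z : Ω → ℝ) {E : Ω → Prop}
    (h : pr P E = 0) : (∑ ω, if E ω then Z ω * P ω else 0) = 0 := by
  have hnull : ∀ ω, E ω → P ω = 0 := fun ω hE => by
    simpa [hE] using (sum_eq_zero_iff_of_nonneg fun ω _ => by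
      split_ifs <;> simp [hP ω]).mp h ω (mem_univ ω)
  exact sum_eq_zero fun ω _ => by split_ifs with hE <;> simp [hE, hnull]

lemma cexp_mul_pr (hP : ∀ ω, 0 ≤ P ω) (Z : Ω → ℝ) (E : Ω → Prop) :
    cexp P Z E * pr P E = ∑ ω, if E ω then Z ω * P ω else 0 := by
  by_cases h : pr P E = 0
  · rw [h, mul_zero, sum_ite_mul_eq_zero_of_pr_eq_zero hP Z h]
  · exact div_mul_cancel₀ _ h

lemma cexp_congr {Z Z' : Ω → ℝ} {E : Ω → Prop} (h : ∀ ω, E ω → Z ω = Z' ω) :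
    cexp P Z E = cexp P Z' E := by
  unfold cexp
  congr 1
  refine sum_congr rfl fun ω _ => ?_
  split_ifs with hE
  · rw [h ω hE]
  · rfl

lemma sum_sum_ite_and_fiber {𝓧 : Type*} [Fintype 𝓧] (X : Ω → 𝓧) (E : Ω → Prop) (f : Ω → ℝ) :
    ∑ x, ∑ ω, (if X ω = x ∧ E ω then f ω else 0) = ∑ ω, if E ω then f ω else 0 := by
  rw [sum_comm]
  exact sum_congr rfl fun ω _ => by simp only [ite_and, sum_ite_eq, mem_univ, if_true]

lemma cexp_eq_sum_cexp_mul_pr_div (hP : ∀ ω, 0 ≤ P ω) {𝓧 : Type*} [Fintype 𝓧] (X : Ω → 𝓧)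
    (Z : Ω → ℝ) (E : Ω → Prop) :
    cexp P Z E = ∑ x ∈ univ.filter (fun x => 0 < pr P (fun ω => X ω = x ∧ E ω)),
      cexp P Z (fun ω => X ω = x ∧ E ω) * (pr P (fun ω => X ω = x ∧ E ω) / pr P E) := by
  have hnull : ∀ x, ¬ 0 < pr P (fun ω => X ω = x ∧ E ω) →
      cexp P Z (fun ω => X ω = x ∧ E ω) * pr P (fun ω => X ω = x ∧ E ω) = 0 := fun x hx => by
    rw [le_antisymm (not_lt.mp hx) (pr_nonneg hP _), mul_zero]
  simp_rw [← mul_div_assoc, ← sum_div]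
  rw [sum_filter_of_ne fun x _ hx => by_contra fun h => hx (hnull x h),
    sum_congr rfl fun x _ => cexp_mul_pr hP Z _, cexp, ← sum_sum_ite_and_fiber X E]
  -- the two sides differ only in the `Decidable` instances of the conditions `X ω = x ∧ E ω`
  congr!

end

theorem stmt14_general    {Ω 𝓧 : Type*} [Fintype Ω] [Fintype 𝓧]
    (P : Ω → ℝ) (hP : ∀ ω, 0 ≤ P ω)
    (X : Ω → 𝓧) (S : Ω → ℕ) (A : Ω → ℕ) (Y : Ω → ℝ)
    (Y1 : Ω → ℝ)
    (hcons : ∀ ω, A ω = 1 → Y1 ω = Y ω)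
    (hexch : ∀ x, 0 < pr P (fun ω => X ω = x ∧ S ω = 1) → cexp P Y1 (fun ω => X ω = x ∧ S ω = 1) = cexp P Y1 (fun ω => X ω = x ∧ S ω = 1 ∧ A ω = 1))
    (htrans : ∀ x, 0 < pr P (fun ω => X ω = x ∧ S ω = 2) → 0 < pr P (fun ω => X ω = x ∧ S ω = 1) → cexp P Y1 (fun ω => X ω = x ∧ S ω = 2) = cexp P Y1 (fun ω => X ω = x ∧ S ω = 1))
    (hpos1x : ∀ x, 0 < pr P (fun ω => X ω = x ∧ S ω = 2) → 0 < cpr P (fun ω => S ω = 1) (fun ω => X ω = x))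
    : cexp P Y1 (fun ω => S ω = 2) =
      ∑ x ∈ univ.filter (fun x => 0 < pr P (fun ω => X ω = x ∧ S ω = 2)),
        cexp P Y (fun ω => X ω = x ∧ S ω = 1 ∧ A ω = 1) * (pr P (fun ω => X ω = x ∧ S ω = 2) / pr P (fun ω => S ω = 2)) := by
  rw [cexp_eq_sum_cexp_mul_pr_div hP X]
  refine sum_congr rfl fun x hx => ?_
  have hx2 : 0 < pr P (fun ω => X ω = x ∧ S ω = 2) := (mem_filter.mp hx).2
  have hx1 : 0 < pr P (fun ω => X ω = x ∧ S ω = 1) :=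
    pr_congr (P := P) (fun _ => and_comm) ▸ pr_pos_of_cpr_pos hP (hpos1x x hx2)
  rw [htrans x hx2 hx1, hexch x hx1, cexp_congr fun ω h => hcons ω h.2.2]

theorem stmt14    {Ω 𝓧 : Type*} [Fintype Ω] [Fintype 𝓧]
    (P : Ω → ℝ) (hP : ∀ ω, 0 ≤ P ω) (hPsum : ∑ ω, P ω = 1)
    (X : Ω → 𝓧) (S : Ω → ℕ) (A : Ω → ℕ) (Y : Ω → ℝ)
    (Y1 : Ω → ℝ)
    (hS2 : 0 < pr P (fun ω => S ω = 2))
    (hcons : ∀ ω, A ω = 1 → Y1 ω = Y ω)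
    (hexch : ∀ x, 0 < pr P (fun ω => X ω = x ∧ S ω = 1) → cexp P Y1 (fun ω => X ω = x ∧ S ω = 1) = cexp P Y1 (fun ω => X ω = x ∧ S ω = 1 ∧ A ω = 1))
    (hpos : ∀ x, 0 < pr P (fun ω => X ω = x ∧ S ω = 1) → 0 < cpr P (fun ω => A ω = 1) (fun ω => X ω = x ∧ S ω = 1))
    (htrans : ∀ x, 0 < pr P (fun ω => X ω = x ∧ S ω = 2) → 0 < pr P (fun ω => X ω = x ∧ S ω = 1) → cexp P Y1 (fun ω => X ω = x ∧ S ω = 2) = cexp P Y1 (fun ω => X ω = x ∧ S ω = 1))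
    (hpos1x : ∀ x, 0 < pr P (fun ω => X ω = x ∧ S ω = 2) → 0 < cpr P (fun ω => S ω = 1) (fun ω => X ω = x))
    : cexp P Y1 (fun ω => S ω = 2) =
      ∑ x ∈ univ.filter (fun x => 0 < pr P (fun ω => X ω = x ∧ S ω = 2)),
        cexp P Y (fun ω => X ω = x ∧ S ω = 1 ∧ A ω = 1) * (pr P (fun ω => X ω = x ∧ S ω = 2) / pr P (fun ω => S ω = 2)) :=
  stmt14_general P hP X S A Y Y1 hcons hexch htrans hpos1x
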